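/- Let 𝒜 be a unital ℂ-algebra with a star operation, τ : 𝒜 → ℂ a ℂ-linear functional, and (X_i)_{i∈ℕ} a sequence of elements of 𝒜 satisfying the following two conditions: (H'₁) for every k ∈ ℕ and every Y in the unital subalgebra of 𝒜 generated by {X_j : j ≠ k}, one has τ(X_k Y) = 0 and τ((X_k² − τ(X_k²)·1) Y) = 0; (H'₂) for every k ∈ ℕ and all Y₁, Y₂ in the unital subalgebra generated by {X_j : j ≠ k}, one has τ(X_k Y₁ X_k Y₂) = τ(X_k²) τ(Y₁) τ(Y₂). Then for every k, k' ∈ ℕ (possibly equal) and all Y₁, Y₂ in the unital subalgebra of 𝒜 generated by {X_j : j ∉ {k, k'}} with τ(Y₁) = 0, one has τ(X_k Y₁ X_{k'} Y₂) = 0. (This expresses that the free mixing coefficients ℵ[b|ℤ] of the sequence (X_i) vanish for all b ≥ 1.) -/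
import Mathlib


/-- If a sequence `(X_i)` in a unital ℂ-algebra with star satisfies Kargin's conditions
(H'₁) and (H'₂), then its free mixing coefficients vanish: for all `k, k'` and all
`Y₁, Y₂` in the unital subalgebra generated by `{X_j : j ∉ {k, k'}}` with `τ Y₁ = 0`,
one has `τ (X_k Y₁ X_{k'} Y₂) = 0`. -/
theorem kargin_conditions_vanishing_free_mixing
    {A : Type*} [Ring A] [Algebra ℂ A] [StarRing A]
    (τ : A →ₗ[ℂ] ℂ) (X : ℕ → A)
    (H1 : ∀ k : ℕ, ∀ Y ∈ Algebra.adjoin ℂ (X '' {j | j ≠ k}),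
        τ (X k * Y) = 0 ∧ τ ((X k ^ 2 - algebraMap ℂ A (τ (X k ^ 2))) * Y) = 0)
    (H2 : ∀ k : ℕ, ∀ Y₁ ∈ Algebra.adjoin ℂ (X '' {j | j ≠ k}),
        ∀ Y₂ ∈ Algebra.adjoin ℂ (X '' {j | j ≠ k}),
        τ (X k * Y₁ * X k * Y₂) = τ (X k ^ 2) * τ Y₁ * τ Y₂) :
    ∀ k k' : ℕ, ∀ Y₁ ∈ Algebra.adjoin ℂ (X '' {j | j ≠ k ∧ j ≠ k'}),
      ∀ Y₂ ∈ Algebra.adjoin ℂ (X '' {j | j ≠ k ∧ j ≠ k'}),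
      τ Y₁ = 0 → τ (X k * Y₁ * X k' * Y₂) = 0 := by
  intro k k' Y₁ hY₁ Y₂ hY₂ hτ
  have hsub : Algebra.adjoin ℂ (X '' {j | j ≠ k ∧ j ≠ k'}) ≤
      Algebra.adjoin ℂ (X '' {j | j ≠ k}) :=
    Algebra.adjoin_mono (Set.image_mono fun j hj => hj.1)
  by_cases hkk : k = k'
  · subst hkk
    rw [H2 k Y₁ (hsub hY₁) Y₂ (hsub hY₂), hτ]
    ring
  · have hX : X k' ∈ Algebra.adjoin ℂ (X '' {j | j ≠ k}) :=
      Algebra.subset_adjoin ⟨k', fun h => hkk h.symm, rfl⟩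
    have hmem : Y₁ * X k' * Y₂ ∈ Algebra.adjoin ℂ (X '' {j | j ≠ k}) :=
      mul_mem (mul_mem (hsub hY₁) hX) (hsub hY₂)
    rw [mul_assoc (X k) Y₁ (X k'), mul_assoc (X k)]
    exact (H1 k _ hmem).1
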